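/- Let E be a complex inner product space, let h_s, h_c ∈ E with h_s ≠ 0, and set G = ‖h_s‖², g = ‖h_c‖², ρ = ⟨h_s, h_c⟩. Let τ be a real number with G²/(G² + |ρ|²) ≤ τ ≤ 1. Then w* = h_s/‖h_s‖ and Υ* = G/τ satisfy: ‖w*‖ = 1, |⟨h_s, w*⟩|² ≥ τ·Υ*, |⟨h_c, w*⟩|² ≥ (1-τ)·Υ*, and for every w ∈ E with ‖w‖ = 1 and every Υ ≥ 0 with |⟨h_s, w⟩|² ≥ τ·Υ and |⟨h_c, w⟩|² ≥ (1-τ)·Υ, one has Υ ≤ Υ*. -/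

import Mathlib

open scoped ComplexInnerProductSpace

/-! The sensing constraint caps `Υ` at `‖h_s‖²/τ` for every unit `w`, by Cauchy–Schwarz, and
`w_s = h_s/‖h_s‖` attains that cap. So `w_s` is optimal as soon as it is feasible for the
communication constraint, which reads `(1 - τ)‖h_s‖⁴ ≤ τ |ρ|²` and is exactly the lower bound
on `τ`. -/

section InnerProduct

variable {𝕜 E : Type*} [RCLike 𝕜] [NormedAddCommGroup E] [InnerProductSpace 𝕜 E]

theorem sq_norm_inner_le_sq_norm_of_norm_eq_one (x : E) {w : E} (hw : ‖w‖ = 1) :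
    ‖inner 𝕜 x w‖ ^ 2 ≤ ‖x‖ ^ 2 := by
  have := norm_inner_le_norm (𝕜 := 𝕜) x w
  rw [hw, mul_one] at this
  gcongr

theorem norm_inner_inv_norm_smul_right [Module ℝ E] [IsScalarTower ℝ 𝕜 E] (x y : E) :
    ‖inner 𝕜 y (‖x‖⁻¹ • x)‖ = ‖inner 𝕜 y x‖ / ‖x‖ := by
  rw [inner_smul_right_eq_smul, norm_smul, norm_inv, norm_norm, inv_mul_eq_div]

theorem sq_norm_inner_inv_norm_smul_self [Module ℝ E] [IsScalarTower ℝ 𝕜 E] (x : E) :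
    ‖inner 𝕜 x (‖x‖⁻¹ • x)‖ ^ 2 = ‖x‖ ^ 2 := by
  rw [norm_inner_inv_norm_smul_right, inner_self_eq_norm_sq_to_K, norm_pow, RCLike.norm_ofReal,
    abs_norm]
  rcases eq_or_ne ‖x‖ 0 with hx | hx
  · simp [hx]
  · field_simp

end InnerProduct

theorem one_sub_mul_div_le_of_sq_div_le {G r τ : ℝ} (hG : 0 < G)
    (hτ : G ^ 2 / (G ^ 2 + r) ≤ τ) (hr : 0 ≤ r) :
    (1 - τ) * (G / τ) ≤ r / G := by
  have hden : 0 < G ^ 2 + r := by positivity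
  have hτpos : 0 < τ := (div_pos (by positivity) hden).trans_le hτ
  rw [div_le_iff₀ hden] at hτ
  rw [← mul_div_assoc, div_le_div_iff₀ hτpos hG]
  nlinarith

theorem pareto_regime_sensing_centric_general
    {E : Type*} [NormedAddCommGroup E] [InnerProductSpace ℂ E]
    (hs hc : E) (hhs : hs ≠ 0) (τ : ℝ)
    (hτ0 : (‖hs‖ ^ 2) ^ 2 / ((‖hs‖ ^ 2) ^ 2 + ‖⟪hs, hc⟫‖ ^ 2) ≤ τ) :
    ‖(‖hs‖⁻¹ • hs : E)‖ = 1 ∧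
    τ * (‖hs‖ ^ 2 / τ) ≤ ‖⟪hs, (‖hs‖⁻¹ • hs : E)⟫‖ ^ 2 ∧
    (1 - τ) * (‖hs‖ ^ 2 / τ) ≤ ‖⟪hc, (‖hs‖⁻¹ • hs : E)⟫‖ ^ 2 ∧
    ∀ (w : E) (Υ : ℝ), ‖w‖ = 1 → 0 ≤ Υ →
      τ * Υ ≤ ‖⟪hs, w⟫‖ ^ 2 → (1 - τ) * Υ ≤ ‖⟪hc, w⟫‖ ^ 2 →
        Υ ≤ ‖hs‖ ^ 2 / τ := by
  have hG : 0 < ‖hs‖ ^ 2 := by positivity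
  have hτ : 0 < τ := (div_pos (by positivity) (by positivity)).trans_le hτ0
  refine ⟨norm_smul_inv_norm (𝕜 := ℝ) hhs, ?_, ?_, ?_⟩
  · rw [sq_norm_inner_inv_norm_smul_self, mul_div_cancel₀ _ hτ.ne']
  · rw [norm_inner_inv_norm_smul_right, div_pow, norm_inner_symm]
    exact one_sub_mul_div_le_of_sq_div_le hG hτ0 (by positivity)
  · intro w Υ hw _ hsens _
    rw [le_div_iff₀' hτ]
    exact hsens.trans (sq_norm_inner_le_sq_norm_of_norm_eq_one hs hw)

/-- Third regime of Lemma 6 / Theorem 7: with `G = ‖h_s‖²`, `ρ = ⟨h_s, h_c⟩`, and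
`G²/(G² + |ρ|²) ≤ τ ≤ 1`, the sensing-centric beamformer `w* = h_s/‖h_s‖`
together with `Υ* = G/τ` is feasible and optimal for the Pareto problem. -/
theorem pareto_regime_sensing_centric
    {E : Type*} [NormedAddCommGroup E] [InnerProductSpace ℂ E]
    (hs hc : E) (hhs : hs ≠ 0) (τ : ℝ)
    (hτ0 : (‖hs‖ ^ 2) ^ 2 / ((‖hs‖ ^ 2) ^ 2 + ‖⟪hs, hc⟫‖ ^ 2) ≤ τ) (hτ1 : τ ≤ 1) :
    ‖(‖hs‖⁻¹ • hs : E)‖ = 1 ∧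
    τ * (‖hs‖ ^ 2 / τ) ≤ ‖⟪hs, (‖hs‖⁻¹ • hs : E)⟫‖ ^ 2 ∧
    (1 - τ) * (‖hs‖ ^ 2 / τ) ≤ ‖⟪hc, (‖hs‖⁻¹ • hs : E)⟫‖ ^ 2 ∧
    ∀ (w : E) (Υ : ℝ), ‖w‖ = 1 → 0 ≤ Υ →
      τ * Υ ≤ ‖⟪hs, w⟫‖ ^ 2 → (1 - τ) * Υ ≤ ‖⟪hc, w⟫‖ ^ 2 →
        Υ ≤ ‖hs‖ ^ 2 / τ :=
  pareto_regime_sensing_centric_general hs hc hhs τ hτ0
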